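/- Let F be a Minkowski norm on ℝⁿ with dual norm F⁰. Then for every x ≠ 0, F⁰(x)·DF(DF⁰(x)) = x, and for every ξ ≠ 0, F(ξ)·DF⁰(DF(ξ)) = ξ. -/

import Mathlib

open MeasureTheory Real Filter Set
open scoped Topology ENNReal NNReal Pointwise RealInnerProductSpace

noncomputable section

abbrev Euc (n : ℕ) := EuclideanSpace ℝ (Fin n)

structure MinkowskiNorm (n : ℕ) where
  F : Euc n → ℝ
  cont : Continuous F
  smooth : ContDiffOn ℝ (⊤ : ℕ∞) F (({0} : Set (Euc n))ᶜ)
  conv : ConvexOn ℝ Set.univ F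
  even : ∀ x, F (-x) = F x
  homog : ∀ (c : ℝ) (x : Euc n), 0 ≤ c → F (c • x) = c * F x
  pos : ∀ x : Euc n, x ≠ 0 → 0 < F x
  elliptic : ∀ x : Euc n, x ≠ 0 → ∀ v : Euc n, v ≠ 0 →
    0 < iteratedFDeriv ℝ 2 (fun y => (F y) ^ 2) x ![v, v]

namespace MinkowskiNorm

variable {n : ℕ}

def dual (F : MinkowskiNorm n) (x : Euc n) : ℝ :=
  sSup {r | ∃ ξ : Euc n, ξ ≠ 0 ∧ r = (inner ℝ x ξ : ℝ) / F.F ξ}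

def wulff (F : MinkowskiNorm n) : Set (Euc n) := {x | F.dual x < 1}

def wulffArea (F : MinkowskiNorm n) : ℝ := n * (volume F.wulff).toReal

def capa (F : MinkowskiNorm n) (p : ℝ) (K : Set (Euc n)) : ℝ :=
  sInf {c | ∃ v : Euc n → ℝ, ContDiff ℝ (⊤ : ℕ∞) v ∧ HasCompactSupport v ∧
    (∀ x ∈ K, 1 ≤ v x) ∧ c = ∫ x, (F.F (gradient v x)) ^ p}

def capaOpen (F : MinkowskiNorm n) (p : ℝ) (U : Set (Euc n)) : ℝ :=
  sSup {c | ∃ K : Set (Euc n), IsCompact K ∧ K ⊆ U ∧ c = F.capa p K}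

def capaSet (F : MinkowskiNorm n) (p : ℝ) (E : Set (Euc n)) : ℝ :=
  sInf {c | ∃ U : Set (Euc n), IsOpen U ∧ E ⊆ U ∧ c = F.capaOpen p U}

def aGauss (F : MinkowskiNorm n) (d : Euc n → ℝ) (x : Euc n) : Euc n :=
  gradient F.F (gradient d x)

def aMeanCurv (F : MinkowskiNorm n) (d : Euc n → ℝ) (x : Euc n) : ℝ :=
  LinearMap.trace ℝ (Euc n) (fderiv ℝ (F.aGauss d) x : Euc n →ₗ[ℝ] Euc n)

def aGaussCurv (F : MinkowskiNorm n) (d : Euc n → ℝ) (x : Euc n) : ℝ :=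
  LinearMap.det ((fderiv ℝ (F.aGauss d) x : Euc n →ₗ[ℝ] Euc n) +
    (((innerSL ℝ (gradient d x)).smulRight (gradient d x) : Euc n →L[ℝ] Euc n) :
      Euc n →ₗ[ℝ] Euc n))

def IsWulffShape (F : MinkowskiNorm n) (M : Set (Euc n)) : Prop :=
  ∃ (r : ℝ) (x₀ : Euc n), 0 < r ∧ M = {x | F.dual (x - x₀) = r}

end MinkowskiNorm

namespace MinkowskiNorm

variable {n : ℕ} (F : MinkowskiNorm n)

lemma F_zero : F.F 0 = 0 := by
  have := F.homog 0 0 le_rfl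
  simpa using this

lemma F_nonneg (x : Euc n) : 0 ≤ F.F x := by
  rcases eq_or_ne x 0 with rfl | h
  · simp [F.F_zero]
  · exact (F.pos x h).le

lemma contDiffAt {x : Euc n} (hx : x ≠ 0) : ContDiffAt ℝ (⊤ : ℕ∞) F.F x :=
  F.smooth.contDiffAt (IsOpen.mem_nhds isOpen_compl_singleton (by simpa using hx))

lemma diffAt {x : Euc n} (hx : x ≠ 0) : DifferentiableAt ℝ F.F x :=
  (F.contDiffAt hx).differentiableAt (by simp)

lemma hasGradF {x : Euc n} (hx : x ≠ 0) : HasGradientAt F.F (gradient F.F x) x :=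
  (F.diffAt hx).hasGradientAt

lemma exists_lower (e : Euc n) (he : e ≠ 0) :
    ∃ m : ℝ, 0 < m ∧ ∀ y : Euc n, m * ‖y‖ ≤ F.F y := by
  have hcs : IsCompact (Metric.sphere (0 : Euc n) 1) := isCompact_sphere 0 1
  have hne : (Metric.sphere (0 : Euc n) 1).Nonempty :=
    ⟨‖e‖⁻¹ • e, by simp [norm_smul, norm_ne_zero_iff.2 he, inv_mul_cancel₀ (norm_ne_zero_iff.2 he)]⟩
  obtain ⟨ξ₀, hξ₀mem, hmin⟩ := hcs.exists_isMinOn hne F.cont.continuousOn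
  have hξ₀ : ξ₀ ≠ 0 := by
    intro h; rw [h] at hξ₀mem; simp at hξ₀mem
  refine ⟨F.F ξ₀, F.pos _ hξ₀, fun y => ?_⟩
  rcases eq_or_ne y 0 with rfl | hy
  · simp [F.F_zero]
  · have h1 : ‖y‖⁻¹ • y ∈ Metric.sphere (0 : Euc n) 1 := by
      simp [norm_smul, inv_mul_cancel₀ (norm_ne_zero_iff.2 hy)]
    have h2 : F.F ξ₀ ≤ F.F (‖y‖⁻¹ • y) := hmin h1
    have h3 : F.F (‖y‖⁻¹ • y) = ‖y‖⁻¹ * F.F y := F.homog _ _ (by positivity)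
    rw [h3] at h2
    have hy' : (0:ℝ) < ‖y‖ := norm_pos_iff.2 hy
    calc F.F ξ₀ * ‖y‖ ≤ (‖y‖⁻¹ * F.F y) * ‖y‖ := by nlinarith
      _ = F.F y := by field_simp

lemma isCompact_sphereF (e : Euc n) (he : e ≠ 0) :
    IsCompact {ξ : Euc n | F.F ξ = 1} := by
  obtain ⟨m, hm, hml⟩ := F.exists_lower e he
  apply Metric.isCompact_of_isClosed_isBounded
  · exact isClosed_eq F.cont continuous_const
  · apply Metric.isBounded_iff_subset_closedBall (0 : Euc n) |>.2 ⟨m⁻¹, ?_⟩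
    intro ξ hξ
    simp only [Metric.mem_closedBall, dist_zero_right]
    have h := hml ξ
    rw [Set.mem_setOf_eq.mp hξ] at h
    rw [inv_eq_one_div, le_div_iff₀ hm]
    linarith

lemma exists_maximizer (e : Euc n) (he : e ≠ 0) (y : Euc n) :
    ∃ ξ₀ : Euc n, F.F ξ₀ = 1 ∧ ∀ η, F.F η = 1 → ⟪y, η⟫ ≤ ⟪y, ξ₀⟫ := by
  have hne : {ξ : Euc n | F.F ξ = 1}.Nonempty := by
    refine ⟨(F.F e)⁻¹ • e, ?_⟩
    have hp := F.pos e he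
    have := F.homog (F.F e)⁻¹ e (by positivity)
    simp only [Set.mem_setOf_eq, this]
    field_simp
  have hc : Continuous fun ξ : Euc n => ⟪y, ξ⟫ := continuous_const.inner continuous_id
  obtain ⟨ξ₀, hmem, hmax⟩ := (F.isCompact_sphereF e he).exists_isMaxOn hne hc.continuousOn
  exact ⟨ξ₀, hmem, fun η hη => hmax hη⟩

lemma dual_eq_of_max {y ξ₀ : Euc n} (h1 : F.F ξ₀ = 1)
    (h2 : ∀ η, F.F η = 1 → ⟪y, η⟫ ≤ ⟪y, ξ₀⟫) : F.dual y = ⟪y, ξ₀⟫ := by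
  have hξ₀ : ξ₀ ≠ 0 := fun h => by simp [h, F.F_zero] at h1
  apply IsGreatest.csSup_eq
  constructor
  · exact ⟨ξ₀, hξ₀, by rw [h1]; simp⟩
  · rintro r ⟨ξ, hξ, rfl⟩
    have hFξ : 0 < F.F ξ := F.pos ξ hξ
    have hη : F.F ((F.F ξ)⁻¹ • ξ) = 1 := by
      rw [F.homog _ _ (by positivity)]; field_simp
    have := h2 _ hη
    rw [real_inner_smul_right] at this
    rw [div_eq_inv_mul]
    exact this

lemma inner_le_dual_mul (e : Euc n) (he : e ≠ 0) (y ξ : Euc n) :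
    ⟪y, ξ⟫ ≤ F.dual y * F.F ξ := by
  obtain ⟨ξ₀, h1, h2⟩ := F.exists_maximizer e he y
  rw [F.dual_eq_of_max h1 h2]
  rcases eq_or_ne ξ 0 with rfl | hξ
  · simp [F.F_zero]
  · have hFξ : 0 < F.F ξ := F.pos ξ hξ
    have hη : F.F ((F.F ξ)⁻¹ • ξ) = 1 := by
      rw [F.homog _ _ (by positivity)]; field_simp
    have h3 := h2 _ hη
    rw [real_inner_smul_right] at h3
    calc ⟪y, ξ⟫ = F.F ξ * ((F.F ξ)⁻¹ * ⟪y, ξ⟫) := by field_simp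
      _ ≤ F.F ξ * ⟪y, ξ₀⟫ := by nlinarith
      _ = ⟪y, ξ₀⟫ * F.F ξ := by ring

lemma dual_pos {x : Euc n} (hx : x ≠ 0) : 0 < F.dual x := by
  obtain ⟨ξ₀, h1, h2⟩ := F.exists_maximizer x hx x
  rw [F.dual_eq_of_max h1 h2]
  have hη : F.F ((F.F x)⁻¹ • x) = 1 := by
    have hp := F.pos x hx
    rw [F.homog _ _ (by positivity)]
    field_simp
  calc (0:ℝ) < (F.F x)⁻¹ * ⟪x, x⟫ := by
        have := F.pos x hx
        have hx' : ‖x‖ ≠ 0 := norm_ne_zero_iff.2 hx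
        have hxx : (0:ℝ) < ⟪x, x⟫ := by
          rw [real_inner_self_eq_norm_sq]
          positivity
        positivity
    _ = ⟪x, (F.F x)⁻¹ • x⟫ := (real_inner_smul_right _ _ _).symm
    _ ≤ ⟪x, ξ₀⟫ := h2 _ hη


/-- Derivative of `t ↦ F(x + t v)` at `t₀`, when `x + t₀ v ≠ 0`. -/
lemma hasDerivAt_line {x v : Euc n} {t₀ : ℝ} (h : x + t₀ • v ≠ 0) :
    HasDerivAt (fun t : ℝ => F.F (x + t • v)) ⟪gradient F.F (x + t₀ • v), v⟫ t₀ := by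
  have hγ : HasDerivAt (fun t : ℝ => x + t • v) v t₀ := by
    simpa using ((hasDerivAt_id t₀).smul_const v).const_add x
  have hF := (F.hasGradF h).hasFDerivAt
  have := hF.comp_hasDerivAt t₀ hγ
  simpa [Function.comp_def] using this

/-- Euler's identity: `⟪∇F ξ, ξ⟫ = F ξ`. -/
lemma euler {ξ : Euc n} (hξ : ξ ≠ 0) : ⟪gradient F.F ξ, ξ⟫ = F.F ξ := by
  have h1 : HasDerivAt (fun t : ℝ => F.F ((0 : Euc n) + t • ξ))
      ⟪gradient F.F ξ, ξ⟫ 1 := by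
    have := F.hasDerivAt_line (x := (0:Euc n)) (v := ξ) (t₀ := 1) (by simpa using hξ)
    simpa using this
  have h2 : (fun t : ℝ => F.F ((0:Euc n) + t • ξ)) =ᶠ[𝓝 (1:ℝ)] fun t => t * F.F ξ := by
    filter_upwards [Ioi_mem_nhds (by norm_num : (0:ℝ) < 1)] with t ht
    rw [zero_add, F.homog t ξ (le_of_lt ht)]
  have h3 : HasDerivAt (fun t : ℝ => t * F.F ξ) ⟪gradient F.F ξ, ξ⟫ 1 := by
    apply h1.congr_of_eventuallyEq h2.symm
  have h4 : HasDerivAt (fun t : ℝ => t * F.F ξ) (F.F ξ) 1 := by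
    simpa using (hasDerivAt_id (1:ℝ)).mul_const (F.F ξ)
  exact h3.unique h4

/-- Convexity gradient inequality: `⟪∇F ξ, y⟫ ≤ F y`. -/
lemma grad_inner_le {ξ : Euc n} (hξ : ξ ≠ 0) (y : Euc n) :
    ⟪gradient F.F ξ, y⟫ ≤ F.F y := by
  have hline := F.hasDerivAt_line (x := ξ) (v := y - ξ) (t₀ := 0) (by simpa using hξ)
  simp only [zero_smul, add_zero] at hline
  have hconv : ConvexOn ℝ Set.univ (fun t : ℝ => F.F (ξ + t • (y - ξ))) := by
    have h := F.conv.comp_affineMap (AffineMap.lineMap ξ y : ℝ →ᵃ[ℝ] Euc n)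
    have heq : (fun t : ℝ => F.F (ξ + t • (y - ξ)))
        = F.F ∘ (AffineMap.lineMap ξ y : ℝ →ᵃ[ℝ] Euc n) := by
      funext t
      simp [AffineMap.lineMap_apply, add_comm, vsub_eq_sub]
    rw [heq]
    exact h.subset (fun t _ => by simp) convex_univ
  have hs := hconv.le_slope_of_hasDerivAt (Set.mem_univ (0:ℝ)) (Set.mem_univ (1:ℝ))
    (by norm_num) hline
  have hg1 : F.F (ξ + (1:ℝ) • (y - ξ)) = F.F y := by
    congr 1; simp
  have hg0 : F.F (ξ + (0:ℝ) • (y - ξ)) = F.F ξ := by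
    congr 1; simp
  rw [slope_def_field] at hs
  simp only [hg1, hg0, inner_sub_right] at hs
  have he := F.euler hξ
  rw [he] at hs
  have h10 : (F.F y - F.F ξ) / (1 - 0) = F.F y - F.F ξ := by norm_num
  rw [h10] at hs
  linarith


lemma f2_smooth : ContDiffOn ℝ (⊤ : ℕ∞) (fun y => F.F y ^ 2) (({0} : Set (Euc n))ᶜ) :=
  F.smooth.pow 2

lemma deriv2_line_pos {x v : Euc n} (hv : v ≠ 0) {t : ℝ}
    (h : ∀ s : ℝ, s ∈ Set.Ioo (0:ℝ) 1 → x + s • v ≠ 0) (ht : t ∈ Set.Ioo (0:ℝ) 1) :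
    0 < deriv^[2] (fun s : ℝ => F.F (x + s • v) ^ 2) t := by
  set f2 : Euc n → ℝ := fun y => F.F y ^ 2 with hf2
  set γ : ℝ → Euc n := fun s => x + s • v with hγdef
  have hγd : ∀ s : ℝ, HasDerivAt γ v s := fun s => by
    simpa [hγdef] using ((hasDerivAt_id s).smul_const v).const_add x
  have hU : IsOpen {s : ℝ | γ s ≠ 0} := by
    have : Continuous γ := by continuity
    exact isOpen_compl_singleton.preimage this
  have hUt : {s : ℝ | γ s ≠ 0} ∈ 𝓝 t := hU.mem_nhds (h t ht)
  -- first derivative formula on U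
  have hd1 : ∀ s, γ s ≠ 0 → HasDerivAt (fun u : ℝ => f2 (γ u)) (fderiv ℝ f2 (γ s) v) s := by
    intro s hs
    have hdiff : DifferentiableAt ℝ f2 (γ s) :=
      ((F.f2_smooth.contDiffAt (isOpen_compl_singleton.mem_nhds (by simpa using hs))).differentiableAt (by simp))
    exact hdiff.hasFDerivAt.comp_hasDerivAt s (hγd s)
  have hderiv1 : deriv (fun u : ℝ => f2 (γ u)) =ᶠ[𝓝 t] fun s => fderiv ℝ f2 (γ s) v := by
    filter_upwards [hUt] with s hs
    exact (hd1 s hs).deriv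
  -- second derivative
  have hfd : ContDiffOn ℝ (⊤ : ℕ∞) (fderiv ℝ f2) (({0} : Set (Euc n))ᶜ) :=
    F.f2_smooth.fderiv_of_isOpen isOpen_compl_singleton (by simp)
  have hdiff2 : DifferentiableAt ℝ (fderiv ℝ f2) (γ t) :=
    ((hfd.contDiffAt (isOpen_compl_singleton.mem_nhds (by simpa using h t ht))).differentiableAt (by simp))
  have h2 : HasDerivAt (fun s : ℝ => fderiv ℝ f2 (γ s)) (fderiv ℝ (fderiv ℝ f2) (γ t) v) t :=
    hdiff2.hasFDerivAt.comp_hasDerivAt t (hγd t)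
  have h3 : HasDerivAt (fun s : ℝ => fderiv ℝ f2 (γ s) v)
      (fderiv ℝ (fderiv ℝ f2) (γ t) v v) t := by
    have := h2.clm_apply (hasDerivAt_const t v)
    simpa using this
  have h4 : deriv^[2] (fun s : ℝ => f2 (γ s)) t = fderiv ℝ (fderiv ℝ f2) (γ t) v v := by
    have : deriv^[2] (fun s : ℝ => f2 (γ s)) t = deriv (deriv (fun s : ℝ => f2 (γ s))) t := by
      simp [Function.iterate_succ, Function.comp]
    rw [this, Filter.EventuallyEq.deriv_eq hderiv1]
    exact h3.deriv
  rw [show (fun s : ℝ => F.F (x + s • v) ^ 2) = fun s : ℝ => f2 (γ s) from rfl, h4]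
  have := F.elliptic (γ t) (h t ht) v hv
  rwa [iteratedFDeriv_two_apply] at this

lemma midpoint_lt {η₁ η₂ : Euc n} (h1 : F.F η₁ = 1) (h2 : F.F η₂ = 1)
    (hne : η₁ ≠ η₂) (hsum : η₁ + η₂ ≠ 0) :
    F.F ((2⁻¹ : ℝ) • (η₁ + η₂)) < 1 := by
  have hη₁ : η₁ ≠ 0 := fun h => by simp [h, F.F_zero] at h1
  have hη₂ : η₂ ≠ 0 := fun h => by simp [h, F.F_zero] at h2
  set v : Euc n := η₂ - η₁ with hv
  have hvne : v ≠ 0 := sub_ne_zero.2 (Ne.symm hne)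
  -- segment avoids zero
  have hseg : ∀ s : ℝ, s ∈ Set.Ioo (0:ℝ) 1 → η₁ + s • v ≠ 0 := by
    intro s hs habs
    -- η₁ + s(η₂ - η₁) = 0 ⇒ (1-s)η₁ = -s η₂
    have hkey : (1 - s) • η₁ = (-s) • η₂ := by
      have : (1 - s) • η₁ + s • η₂ = 0 := by
        rw [hv] at habs
        rw [← habs]
        module
      rw [neg_smul]
      linear_combination (norm := module) this
    have hs0 : (0:ℝ) < s := hs.1
    have hs1 : s < 1 := hs.2
    -- apply F
    have hF1 : F.F ((1 - s) • η₁) = (1 - s) := by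
      rw [F.homog _ _ (by linarith), h1, mul_one]
    have hF2 : F.F ((1-s) • η₁) = s := by
      rw [hkey, neg_smul, F.even, F.homog _ _ hs0.le, h2, mul_one]
    have heqs : s = 1 - s := by rw [← hF1, hF2]
    have : s = 2⁻¹ := by linarith
    -- then η₁ = -η₂, contradicting hsum
    subst this
    apply hsum
    have : (2⁻¹ : ℝ) • (η₁ + η₂) = 0 := by
      linear_combination (norm := module) hkey
    have h22 := congrArg (fun z : Euc n => (2:ℝ) • z) this
    simpa [smul_smul] using h22
  -- strict convexity of g on [0,1]
  set g : ℝ → ℝ := fun s => F.F (η₁ + s • v) ^ 2 with hg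
  have hgc : ContinuousOn g (Set.Icc 0 1) := by
    apply Continuous.continuousOn
    apply (F.cont.comp (by continuity)).pow
  have hconv : StrictConvexOn ℝ (Set.Icc (0:ℝ) 1) g := by
    apply strictConvexOn_of_deriv2_pos (convex_Icc 0 1) hgc
    intro s hsmem
    rw [interior_Icc] at hsmem
    exact F.deriv2_line_pos hvne hseg hsmem
  have hmid := hconv.2 (Set.mem_Icc.2 ⟨le_refl 0, zero_le_one⟩)
    (Set.mem_Icc.2 ⟨zero_le_one, le_refl 1⟩) (by norm_num)
    (by norm_num : (0:ℝ) < 2⁻¹) (by norm_num : (0:ℝ) < 2⁻¹) (by norm_num)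
  have hg0 : g 0 = 1 := by simp [hg, h1]
  have hg1 : g 1 = 1 := by
    show F.F (η₁ + (1:ℝ) • v) ^ 2 = 1
    have hh : η₁ + (1:ℝ) • v = η₂ := by rw [hv]; module
    rw [hh, h2]; norm_num
  have hsc : (2⁻¹:ℝ) • (0:ℝ) + (2⁻¹:ℝ) • (1:ℝ) = (2⁻¹:ℝ) := by norm_num
  rw [hsc, hg0, hg1] at hmid
  have hgm : g (2⁻¹:ℝ) = F.F ((2⁻¹:ℝ) • (η₁ + η₂)) ^ 2 := by
    have hh : η₁ + (2⁻¹:ℝ) • v = (2⁻¹:ℝ) • (η₁ + η₂) := by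
      rw [hv]; module
    show F.F (η₁ + (2⁻¹:ℝ) • v) ^ 2 = F.F ((2⁻¹:ℝ) • (η₁ + η₂)) ^ 2
    rw [hh]
  rw [hgm] at hmid
  have h21 : (2⁻¹:ℝ) • (1:ℝ) + (2⁻¹:ℝ) • (1:ℝ) = 1 := by norm_num
  rw [h21] at hmid
  have hFnn := F.F_nonneg ((2⁻¹:ℝ) • (η₁ + η₂))
  nlinarith


lemma max_unique {x : Euc n} (hx : x ≠ 0) {η₁ η₂ : Euc n}
    (h1 : F.F η₁ = 1) (hm1 : ⟪x, η₁⟫ = F.dual x)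
    (h2 : F.F η₂ = 1) (hm2 : ⟪x, η₂⟫ = F.dual x) : η₁ = η₂ := by
  by_contra hne
  have hdpos : 0 < F.dual x := F.dual_pos hx
  set mid : Euc n := (2⁻¹:ℝ) • (η₁ + η₂) with hmid
  have hinner : ⟪x, mid⟫ = F.dual x := by
    rw [hmid, real_inner_smul_right, inner_add_right, hm1, hm2]; ring
  have hmidne : mid ≠ 0 := by
    intro h; rw [h, inner_zero_right] at hinner; linarith
  have hsum : η₁ + η₂ ≠ 0 := by
    intro h; apply hmidne; rw [hmid, h, smul_zero]
  have hlt : F.F mid < 1 := F.midpoint_lt h1 h2 hne hsum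
  have hfund : ⟪x, mid⟫ ≤ F.dual x * F.F mid := F.inner_le_dual_mul x hx x mid
  rw [hinner] at hfund
  nlinarith

lemma max_stable {x : Euc n} (hx : x ≠ 0) {ξ₀ : Euc n}
    (h0 : F.F ξ₀ = 1) (hm0 : ∀ η, F.F η = 1 → ⟪x, η⟫ ≤ ⟪x, ξ₀⟫)
    {ε : ℝ} (hε : 0 < ε) :
    ∃ δ > 0, ∀ y ξy : Euc n, ‖y - x‖ < δ → F.F ξy = 1 →
      (∀ η, F.F η = 1 → ⟪y, η⟫ ≤ ⟪y, ξy⟫) → ‖ξy - ξ₀‖ < ε := by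
  obtain ⟨m, hm, hml⟩ := F.exists_lower x hx
  set R : ℝ := m⁻¹ with hR
  have hRpos : 0 < R := by positivity
  have hbound : ∀ ξ : Euc n, F.F ξ = 1 → ‖ξ‖ ≤ R := by
    intro ξ hξ
    have h := hml ξ
    rw [hξ] at h
    rw [hR, inv_eq_one_div, le_div_iff₀ hm]
    linarith
  set K : Set (Euc n) := {ξ | F.F ξ = 1} ∩ {ξ | ε ≤ ‖ξ - ξ₀‖} with hK
  rcases Set.eq_empty_or_nonempty K with hKe | hKne
  · refine ⟨1, one_pos, fun y ξy _ hFy _ => ?_⟩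
    by_contra hcon
    push_neg at hcon
    exact Set.eq_empty_iff_forall_notMem.1 hKe ξy ⟨hFy, hcon⟩
  · have hKc : IsCompact K := ((F.isCompact_sphereF x hx).inter_right
      (isClosed_le continuous_const (continuous_id.sub continuous_const).norm))
    have hcont : Continuous fun ξ : Euc n => ⟪x, ξ⟫ := continuous_const.inner continuous_id
    obtain ⟨ηs, hηsK, hηsmax⟩ := hKc.exists_isMaxOn hKne hcont.continuousOn
    have hηsS : F.F ηs = 1 := hηsK.1
    have hηsfar : ε ≤ ‖ηs - ξ₀‖ := hηsK.2
    have hdx : F.dual x = ⟪x, ξ₀⟫ := F.dual_eq_of_max h0 hm0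
    have hlt : ⟪x, ηs⟫ < ⟪x, ξ₀⟫ := by
      rcases lt_or_eq_of_le (hm0 ηs hηsS) with h | h
      · exact h
      · exfalso
        have heq : ηs = ξ₀ := F.max_unique hx hηsS (h.trans hdx.symm) h0 hdx.symm
        rw [heq, sub_self, norm_zero] at hηsfar
        linarith
    set D : ℝ := ⟪x, ξ₀⟫ - ⟪x, ηs⟫ with hD
    have hDpos : 0 < D := by rw [hD]; linarith
    refine ⟨D / (2 * R + 1), by positivity, fun y ξy hy hFy hymax => ?_⟩
    by_contra hcon
    push_neg at hcon
    have hξyK : ξy ∈ K := ⟨hFy, hcon⟩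
    have hA : ⟪x, ξy⟫ ≤ ⟪x, ηs⟫ := hηsmax hξyK
    have hCS1 : ⟪x - y, ξy⟫ ≥ -(‖y - x‖ * R) := by
      have hcs := abs_real_inner_le_norm (x - y) ξy
      have hn : ‖x - y‖ = ‖y - x‖ := norm_sub_rev x y
      have h1 : ‖x - y‖ * ‖ξy‖ ≤ ‖y - x‖ * R := by
        rw [hn]
        exact mul_le_mul_of_nonneg_left (hbound ξy hFy) (norm_nonneg _)
      have h2 := neg_abs_le (⟪x - y, ξy⟫)
      nlinarith [abs_nonneg (⟪x - y, ξy⟫)]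
    have hCS2 : ⟪y - x, ξ₀⟫ ≥ -(‖y - x‖ * R) := by
      have hcs := abs_real_inner_le_norm (y - x) ξ₀
      have h1 : ‖y - x‖ * ‖ξ₀‖ ≤ ‖y - x‖ * R :=
        mul_le_mul_of_nonneg_left (hbound ξ₀ h0) (norm_nonneg _)
      have h2 := neg_abs_le (⟪y - x, ξ₀⟫)
      nlinarith [abs_nonneg (⟪y - x, ξ₀⟫)]
    have hyξ₀ : ⟪y, ξ₀⟫ ≤ ⟪y, ξy⟫ := hymax ξ₀ h0
    have hsplit1 : ⟪x, ξy⟫ = ⟪y, ξy⟫ + ⟪x - y, ξy⟫ := by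
      rw [← inner_add_left]; congr 1; abel
    have hsplit2 : ⟪y, ξ₀⟫ = ⟪x, ξ₀⟫ + ⟪y - x, ξ₀⟫ := by
      rw [← inner_add_left]; congr 1; abel
    have h2R1 : (0:ℝ) < 2 * R + 1 := by positivity
    have hδ : ‖y - x‖ * (2 * R) < D := by
      have hstep : ‖y - x‖ * (2 * R + 1) < D := by
        have := mul_lt_mul_of_pos_right hy h2R1
        rwa [div_mul_cancel₀ _ h2R1.ne'] at this
      nlinarith [norm_nonneg (y - x)]
    have hfinal : ⟪x, ηs⟫ < ⟪x, ξy⟫ := by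
      have hlow : ⟪x, ξy⟫ ≥ ⟪x, ξ₀⟫ - 2 * (‖y - x‖ * R) := by
        rw [hsplit1]
        have hy2 : ⟪y, ξy⟫ ≥ ⟪x, ξ₀⟫ + ⟪y - x, ξ₀⟫ := by rw [← hsplit2]; exact hyξ₀
        nlinarith
      rw [hD] at hδ
      nlinarith
    linarith


lemma hasGradient_dual {x : Euc n} (hx : x ≠ 0) {ξ₀ : Euc n}
    (h0 : F.F ξ₀ = 1) (hm0 : ∀ η, F.F η = 1 → ⟪x, η⟫ ≤ ⟪x, ξ₀⟫) :
    HasGradientAt F.dual ξ₀ x := by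
  rw [hasGradientAt_iff_isLittleO, Asymptotics.isLittleO_iff]
  intro c hc
  obtain ⟨δ, hδpos, hδ⟩ := F.max_stable hx h0 hm0 hc
  have hball : Metric.ball x δ ∈ 𝓝 x := Metric.ball_mem_nhds x hδpos
  filter_upwards [hball] with y hy
  have hyx : ‖y - x‖ < δ := by
    rw [Metric.mem_ball, dist_eq_norm] at hy; exact hy
  obtain ⟨ξy, hFy, hymax⟩ := F.exists_maximizer x hx y
  have hclose : ‖ξy - ξ₀‖ < c := hδ y ξy hyx hFy hymax
  have hdx : F.dual x = ⟪x, ξ₀⟫ := F.dual_eq_of_max h0 hm0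
  have hdy : F.dual y = ⟪y, ξy⟫ := F.dual_eq_of_max hFy hymax
  -- lower bound : 0 ≤ expr
  have hlow : 0 ≤ F.dual y - F.dual x - ⟪ξ₀, y - x⟫ := by
    have h1 : ⟪y, ξ₀⟫ ≤ F.dual y := by rw [hdy]; exact hymax ξ₀ h0
    have h2 : ⟪ξ₀, y - x⟫ = ⟪y, ξ₀⟫ - ⟪x, ξ₀⟫ := by
      rw [inner_sub_right, real_inner_comm ξ₀ y, real_inner_comm ξ₀ x]
    rw [h2, hdx]
    linarith
  -- upper bound
  have hup : F.dual y - F.dual x - ⟪ξ₀, y - x⟫ ≤ ‖y - x‖ * ‖ξy - ξ₀‖ := by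
    have h2 : ⟪ξ₀, y - x⟫ = ⟪y, ξ₀⟫ - ⟪x, ξ₀⟫ := by
      rw [inner_sub_right, real_inner_comm ξ₀ y, real_inner_comm ξ₀ x]
    have h3 : F.dual y - F.dual x - ⟪ξ₀, y - x⟫ = ⟪y, ξy⟫ - ⟪y, ξ₀⟫ := by
      rw [hdy, hdx, h2]; ring
    have h4 : ⟪y, ξy⟫ - ⟪y, ξ₀⟫ = ⟪y - x, ξy - ξ₀⟫ + ⟪x, ξy - ξ₀⟫ := by
      have e1 : ⟪y - x, ξy - ξ₀⟫ = ⟪y, ξy⟫ - ⟪y, ξ₀⟫ - ⟪x, ξy⟫ + ⟪x, ξ₀⟫ := by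
        rw [inner_sub_right, inner_sub_left, inner_sub_left]; ring
      have e2 : ⟪x, ξy - ξ₀⟫ = ⟪x, ξy⟫ - ⟪x, ξ₀⟫ := inner_sub_right _ _ _
      rw [e1, e2]; ring
    have h5 : ⟪x, ξy - ξ₀⟫ ≤ 0 := by
      rw [inner_sub_right]
      have := hm0 ξy hFy
      linarith
    have h6 : ⟪y - x, ξy - ξ₀⟫ ≤ ‖y - x‖ * ‖ξy - ξ₀‖ := real_inner_le_norm _ _
    linarith
  rw [Real.norm_eq_abs, abs_of_nonneg hlow]
  calc F.dual y - F.dual x - ⟪ξ₀, y - x⟫ ≤ ‖y - x‖ * ‖ξy - ξ₀‖ := hup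
    _ ≤ ‖y - x‖ * c := mul_le_mul_of_nonneg_left hclose.le (norm_nonneg _)
    _ = c * ‖y - x‖ := mul_comm _ _

lemma part1 {x : Euc n} (hx : x ≠ 0) :
    F.dual x • gradient F.F (gradient F.dual x) = x := by
  obtain ⟨ξ₀, h0, hm0⟩ := F.exists_maximizer x hx x
  have hgd : gradient F.dual x = ξ₀ := (F.hasGradient_dual hx h0 hm0).gradient
  have hξ₀ : ξ₀ ≠ 0 := fun h => by simp [h, F.F_zero] at h0
  have hdx : F.dual x = ⟪x, ξ₀⟫ := F.dual_eq_of_max h0 hm0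
  -- G has a global min at ξ₀
  set G : Euc n → ℝ := fun ξ => F.dual x * F.F ξ - ⟪x, ξ⟫ with hG
  have hG0 : G ξ₀ = 0 := by
    rw [hG]; simp only; rw [h0, mul_one, hdx, sub_self]
  have hGnn : ∀ ξ, 0 ≤ G ξ := fun ξ => by
    have := F.inner_le_dual_mul x hx x ξ
    rw [hG]; simp only; linarith
  have hmin : IsLocalMin G ξ₀ :=
    Filter.Eventually.of_forall (fun ξ => by rw [hG0]; exact hGnn ξ)
  -- derivative of G at ξ₀
  have hFd : HasFDerivAt F.F ((InnerProductSpace.toDual ℝ (Euc n)) (gradient F.F ξ₀)) ξ₀ :=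
    (F.hasGradF hξ₀).hasFDerivAt
  have hId : HasFDerivAt (fun ξ : Euc n => ⟪x, ξ⟫) (innerSL ℝ x) ξ₀ :=
    (innerSL ℝ x).hasFDerivAt
  have hGd : HasFDerivAt G
      ((F.dual x) • ((InnerProductSpace.toDual ℝ (Euc n)) (gradient F.F ξ₀)) - innerSL ℝ x) ξ₀ :=
    (hFd.const_mul (F.dual x)).sub hId
  have hfz : ((F.dual x) • ((InnerProductSpace.toDual ℝ (Euc n)) (gradient F.F ξ₀))
      - innerSL ℝ x) = 0 := by
    rw [← hGd.fderiv]
    exact hmin.fderiv_eq_zero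
  -- conclude
  rw [hgd]
  have hv : ∀ v : Euc n, ⟪F.dual x • gradient F.F ξ₀ - x, v⟫ = 0 := by
    intro v
    have := congrArg (fun L : Euc n →L[ℝ] ℝ => L v) hfz
    simp only [ContinuousLinearMap.sub_apply, ContinuousLinearMap.smul_apply,
      ContinuousLinearMap.zero_apply, InnerProductSpace.toDual_apply_apply, innerSL_apply_apply] at this
    rw [inner_sub_left, real_inner_smul_left]
    simpa using this
  have := hv (F.dual x • gradient F.F ξ₀ - x)
  rw [real_inner_self_eq_norm_sq] at this
  have hnz : ‖F.dual x • gradient F.F ξ₀ - x‖ ^ 2 = 0 := this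
  have hz : F.dual x • gradient F.F ξ₀ - x = 0 := by
    have := pow_eq_zero_iff (n := 2) (by norm_num) |>.1 hnz
    exact norm_eq_zero.1 this
  linear_combination (norm := module) hz

lemma part2 {ξ : Euc n} (hξ : ξ ≠ 0) :
    F.F ξ • gradient F.dual (gradient F.F ξ) = ξ := by
  set x : Euc n := gradient F.F ξ with hxdef
  have hFξ : 0 < F.F ξ := F.pos ξ hξ
  have heuler : ⟪x, ξ⟫ = F.F ξ := by
    rw [hxdef, real_inner_comm]
    rw [real_inner_comm]
    exact F.euler hξ
  have hx : x ≠ 0 := by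
    intro h
    rw [h, inner_zero_left] at heuler
    linarith
  set η : Euc n := (F.F ξ)⁻¹ • ξ with hη
  have hFη : F.F η = 1 := by
    rw [hη, F.homog _ _ (by positivity)]
    field_simp
  have hm0 : ∀ η', F.F η' = 1 → ⟪x, η'⟫ ≤ ⟪x, η⟫ := by
    intro η' hη'
    have h1 : ⟪x, η'⟫ ≤ F.F η' := F.grad_inner_le hξ η'
    have h2 : ⟪x, η⟫ = 1 := by
      rw [hη, real_inner_smul_right, heuler]
      field_simp
    rw [h2]
    rw [hη'] at h1
    exact h1
  have hgd : gradient F.dual x = η := (F.hasGradient_dual hx hFη hm0).gradient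
  rw [hgd, hη, smul_smul, mul_inv_cancel₀ hFξ.ne', one_smul]

end MinkowskiNorm

theorem stmt1 {n : ℕ} (F : MinkowskiNorm n) :
    (∀ x : Euc n, x ≠ 0 → F.dual x • gradient F.F (gradient F.dual x) = x) ∧
    (∀ ξ : Euc n, ξ ≠ 0 → F.F ξ • gradient F.dual (gradient F.F ξ) = ξ) :=
  ⟨fun _ hx => F.part1 hx, fun _ hξ => F.part2 hξ⟩
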